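/- arXiv:quant-ph/0009091 — 2 statements merged into one kernel-verified Lean document; each statement's English description precedes it below -/
import Mathlib

section
/- For all square-summable nonnegative real sequences (a_i), ∑_{d≥1} (1/d) ∑_{i=1}^{d} a_i a_{d−i+1} ≤ π ∑_{i≥1} a_i². -/
/-!
Schur's test with the weights `√(x / y)`. Put `x = m + 1/2`, `y = n + 1/2`, so that
`m + n + 1 = x + y`, and `w x y = √x / (√y (x + y))`. By AM-GM,
`|a_m a_n| / (x + y) ≤ (a_m² w x y + a_n² w y x) / 2`, and each row sum `∑ₙ w x (n + 1/2)` is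
at most `∫₀^∞ w x y dy = π`, because `w x` is decreasing and `2 arctan √(y / x)` is a
primitive. Hence the double series `∑ a_m a_n / (m + n + 1)` is at most `π ∑ a_m²`; the series
of the theorem is this double series summed along antidiagonals.
-/

open Real Finset Set

noncomputable def schurWeight (x y : ℝ) : ℝ := √x / (√y * (x + y))

section SchurWeight

variable {x y : ℝ}

theorem schurWeight_nonneg (hx : 0 ≤ x) (hy : 0 ≤ y) : 0 ≤ schurWeight x y := by
  unfold schurWeight; positivity

theorem antitoneOn_schurWeight (hx : 0 ≤ x) : AntitoneOn (schurWeight x) (Ioi 0) := by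
  intro y₁ (hy₁ : 0 < y₁) y₂ _ hy
  unfold schurWeight
  gcongr

theorem hasDerivAt_two_mul_arctan_sqrt_div_sqrt (hx : 0 < x) (hy : 0 < y) :
    HasDerivAt (fun z => 2 * arctan (√z / √x)) (schurWeight x y) y := by
  have h := (((hasDerivAt_sqrt hy.ne').div_const √x).arctan).const_mul 2
  refine h.congr_deriv ?_
  have hsx := sq_sqrt hx.le
  have hsy := sq_sqrt hy.le
  have : 0 < √x := sqrt_pos.2 hx
  have : 0 < √y := sqrt_pos.2 hy
  unfold schurWeight
  rw [div_pow, hsx, hsy]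
  field_simp
  rw [hsx]

theorem integral_schurWeight (hx : 0 < x) {b c : ℝ} (hb : 0 < b) (hbc : b ≤ c) :
    ∫ y in b..c, schurWeight x y = 2 * arctan (√c / √x) - 2 * arctan (√b / √x) := by
  have hpos : ∀ y ∈ uIcc b c, 0 < y := fun y hy => hb.trans_le (uIcc_of_le hbc ▸ hy).1
  refine intervalIntegral.integral_eq_sub_of_hasDerivAt
    (fun y hy => hasDerivAt_two_mul_arctan_sqrt_div_sqrt hx (hpos y hy)) ?_
  exact ((antitoneOn_schurWeight hx.le).mono fun y hy => hpos y hy).intervalIntegrable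

theorem div_one_add_sq_le_arctan {u : ℝ} (hu : 0 ≤ u) : u / (1 + u ^ 2) ≤ arctan u := by
  have h := sin_le (mul_nonneg zero_le_two (arctan_nonneg.2 hu))
  rw [sin_two_mul, sin_arctan, cos_arctan] at h
  have : 0 < √(1 + u ^ 2) := by positivity
  rw [← sq_sqrt (by positivity : 0 ≤ 1 + u ^ 2)]
  field_simp at h ⊢
  linarith

theorem mul_schurWeight_le_arctan (hx : 0 < x) (hy : 0 < y) :
    y * schurWeight x y ≤ arctan (√y / √x) := by
  refine le_of_eq_of_le ?_ (div_one_add_sq_le_arctan (by positivity))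
  have hsx := sq_sqrt hx.le
  have hsy := sq_sqrt hy.le
  have : 0 < √x := sqrt_pos.2 hx
  have : 0 < √y := sqrt_pos.2 hy
  unfold schurWeight
  rw [div_pow, hsx, hsy]
  field_simp
  nlinarith


theorem sum_range_schurWeight_le (hx : 0 < x) (N : ℕ) :
    ∑ n ∈ range N, schurWeight x (n + 1 / 2) ≤ π := by
  cases N with
  | zero => simpa using pi_pos.le
  | succ M =>
    -- the first term is compared with the integral over `[0, 1/2]`, the others with `[1/2, ∞)`
    have hhalf : schurWeight x (1 / 2) ≤ 2 * arctan (√(1 / 2) / √x) := by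
      linarith [mul_schurWeight_le_arctan hx one_half_pos]
    have htail : ∑ i ∈ range M, schurWeight x ((i + 1 : ℕ) + 1 / 2) ≤
        2 * arctan (√(1 / 2 + M) / √x) - 2 * arctan (√(1 / 2) / √x) := by
      rw [← integral_schurWeight hx one_half_pos (by simp)]
      refine le_of_eq_of_le (sum_congr rfl fun i _ => by rw [add_comm]) ?_
      exact AntitoneOn.sum_le_integral
        ((antitoneOn_schurWeight hx.le).mono fun y hy => one_half_pos.trans_le hy.1)
    have hlast := arctan_lt_pi_div_two (√(1 / 2 + M) / √x)
    rw [sum_range_succ', Nat.cast_zero, zero_add]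
    linarith

theorem summable_schurWeight (hx : 0 < x) : Summable fun n : ℕ => schurWeight x (n + 1 / 2) :=
  summable_of_sum_range_le (fun _ => schurWeight_nonneg hx.le (by positivity))
    (sum_range_schurWeight_le hx)

theorem tsum_schurWeight_le (hx : 0 < x) : ∑' n : ℕ, schurWeight x (n + 1 / 2) ≤ π :=
  Real.tsum_le_of_sum_range_le (fun _ => schurWeight_nonneg hx.le (by positivity))
    (sum_range_schurWeight_le hx)

theorem abs_mul_div_add_le (s t : ℝ) (hx : 0 < x) (hy : 0 < y) :
    |s * t| / (x + y) ≤ (s ^ 2 * schurWeight x y + t ^ 2 * schurWeight y x) / 2 := by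
  have : 0 < √x := sqrt_pos.2 hx
  have : 0 < √y := sqrt_pos.2 hy
  have hamgm := two_mul_le_add_sq (|s| * √x) (|t| * √y)
  rw [mul_pow, mul_pow, sq_abs, sq_abs, sq_sqrt hx.le, sq_sqrt hy.le] at hamgm
  have hsum : s ^ 2 * schurWeight x y + t ^ 2 * schurWeight y x
      = (s ^ 2 * x + t ^ 2 * y) / (√x * √y * (x + y)) := by
    unfold schurWeight
    field_simp
    rw [sq_sqrt hx.le, sq_sqrt hy.le]
    ring
  rw [hsum, abs_mul, div_div, le_div_iff₀ (by positivity)]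
  field_simp
  linarith

theorem tsum_mul_schurWeight_le {c : ℝ} (hc : 0 ≤ c) (hx : 0 < x) :
    ∑' n : ℕ, c * schurWeight x (n + 1 / 2) ≤ π * c := by
  rw [tsum_mul_left, mul_comm π]
  exact mul_le_mul_of_nonneg_left (tsum_schurWeight_le hx) hc

end SchurWeight

theorem HasSum.sum_antidiagonal {α : Type*} [AddCommMonoid α] [TopologicalSpace α]
    [ContinuousAdd α] [RegularSpace α] {f : ℕ × ℕ → α} {s : α} (h : HasSum f s) :
    HasSum (fun n => ∑ p ∈ antidiagonal n, f p) s :=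
  ((HasAntidiagonal.sigmaAntidiagonalEquivProd.hasSum_iff).2 h).sigma fun n =>
    (sum_finset_coe (fun p => f p) (antidiagonal n)) ▸ hasSum_fintype _

section HilbertInequality

variable {a : ℕ → ℝ}

theorem summable_sq_mul_schurWeight (hsum : Summable fun i => a i ^ 2) :
    Summable fun p : ℕ × ℕ => a p.1 ^ 2 * schurWeight (p.1 + 1 / 2) (p.2 + 1 / 2) := by
  have hrow (m : ℕ) := (summable_schurWeight (x := m + 1 / 2) (by positivity)).mul_left (a m ^ 2)
  have hnonneg (p : ℕ × ℕ) : 0 ≤ a p.1 ^ 2 * schurWeight (p.1 + 1 / 2) (p.2 + 1 / 2) :=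
    mul_nonneg (sq_nonneg _) (schurWeight_nonneg (by positivity) (by positivity))
  refine (summable_prod_of_nonneg hnonneg).2 ⟨hrow, (hsum.mul_left π).of_nonneg_of_le
    (fun m => tsum_nonneg fun n => hnonneg (m, n))
    fun m => tsum_mul_schurWeight_le (x := m + 1 / 2) (sq_nonneg (a m)) (by positivity)⟩

theorem tsum_sq_mul_schurWeight_le (hsum : Summable fun i => a i ^ 2) :
    ∑' p : ℕ × ℕ, a p.1 ^ 2 * schurWeight (p.1 + 1 / 2) (p.2 + 1 / 2) ≤ π * ∑' i, a i ^ 2 := by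
  have hrow (m : ℕ) := (summable_schurWeight (x := m + 1 / 2) (by positivity)).mul_left (a m ^ 2)
  rw [(summable_sq_mul_schurWeight hsum).tsum_prod' hrow, ← tsum_mul_left]
  exact Summable.tsum_le_tsum
    (fun m => tsum_mul_schurWeight_le (x := m + 1 / 2) (sq_nonneg (a m)) (by positivity))
    (summable_sq_mul_schurWeight hsum).prod (hsum.mul_left π)

theorem abs_mul_div_le_schurWeight (m n : ℕ) :
    |a m * a n / ((m + n : ℕ) + 1)| ≤
      (a m ^ 2 * schurWeight (m + 1 / 2) (n + 1 / 2)
        + a n ^ 2 * schurWeight (n + 1 / 2) (m + 1 / 2)) / 2 := by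
  have h := abs_mul_div_add_le (a m) (a n) (x := m + 1 / 2) (y := n + 1 / 2)
    (by positivity) (by positivity)
  rwa [abs_div, abs_of_pos (by positivity : (0 : ℝ) < (m + n : ℕ) + 1), Nat.cast_add,
    show (m : ℝ) + n + 1 = m + 1 / 2 + (n + 1 / 2) by ring]

theorem summable_hilbert (hsum : Summable fun i => a i ^ 2) :
    Summable fun p : ℕ × ℕ => a p.1 * a p.2 / ((p.1 + p.2 : ℕ) + 1) :=
  .of_norm_bounded (((summable_sq_mul_schurWeight hsum).add
    (summable_sq_mul_schurWeight hsum).prod_symm).div_const 2)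
    fun p => abs_mul_div_le_schurWeight p.1 p.2

theorem tsum_hilbert_le (hsum : Summable fun i => a i ^ 2) :
    ∑' p : ℕ × ℕ, a p.1 * a p.2 / ((p.1 + p.2 : ℕ) + 1) ≤ π * ∑' i, a i ^ 2 := by
  set F : ℕ × ℕ → ℝ := fun p => a p.1 ^ 2 * schurWeight (p.1 + 1 / 2) (p.2 + 1 / 2)
  have hF : Summable F := summable_sq_mul_schurWeight hsum
  calc ∑' p : ℕ × ℕ, a p.1 * a p.2 / ((p.1 + p.2 : ℕ) + 1)
      ≤ ∑' p, (F p + F p.swap) / 2 :=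
        Summable.tsum_le_tsum (fun p => (le_abs_self _).trans (abs_mul_div_le_schurWeight p.1 p.2))
          (summable_hilbert hsum) ((hF.add hF.prod_symm).div_const 2)
    _ = ∑' p, F p := by
        have hswap : ∑' p : ℕ × ℕ, F p.swap = ∑' p, F p := (Equiv.prodComm ℕ ℕ).tsum_eq F
        rw [tsum_div_const, hF.tsum_add hF.prod_symm, hswap]
        ring
    _ ≤ π * ∑' i, a i ^ 2 := tsum_sq_mul_schurWeight_le hsum

end HilbertInequality

/-- `a i` stands for the term `a_{i+1}` of the informal statement. -/
theorem hilbert_quadratic_form_bound_general (a : ℕ → ℝ)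
    (hsum : Summable fun i => a i ^ 2) :
    ∑' d : ℕ, (1 / ((d : ℝ) + 1)) * ∑ i ∈ Finset.range (d + 1), a i * a (d - i)
      ≤ Real.pi * ∑' i : ℕ, a i ^ 2 := by
  have hterm (d : ℕ) : 1 / ((d : ℝ) + 1) * ∑ i ∈ range (d + 1), a i * a (d - i) =
      ∑ p ∈ antidiagonal d, a p.1 * a p.2 / ((p.1 + p.2 : ℕ) + 1) := by
    rw [Nat.sum_antidiagonal_eq_sum_range_succ_mk, mul_sum]
    refine sum_congr rfl fun i hi => ?_
    rw [Nat.add_sub_cancel' (Nat.lt_succ_iff.1 (mem_range.1 hi))]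
    ring
  simp_rw [hterm]
  rw [(summable_hilbert hsum).hasSum.sum_antidiagonal.tsum_eq]
  exact tsum_hilbert_le hsum

/-- Hilbert's inequality in quadratic form: for a square-summable nonnegative
sequence `a` (indexed from `0`, so `a i` stands for `a_{i+1}`),
`∑_{d≥1} (1/d) ∑_{i=1}^d a_i a_{d-i+1} ≤ π ∑_i a_i²`. -/
theorem hilbert_quadratic_form_bound (a : ℕ → ℝ) (ha : ∀ i, 0 ≤ a i)
    (hsum : Summable fun i => a i ^ 2) :
    ∑' d : ℕ, (1 / ((d : ℝ) + 1)) * ∑ i ∈ Finset.range (d + 1), a i * a (d - i)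
      ≤ Real.pi * ∑' i : ℕ, a i ^ 2 :=
  hilbert_quadratic_form_bound_general a hsum
end

section
/- With σ and τ = σ^{(k,d)} as above, for each 1 ≤ i ≤ d the unordered pair {σ⁻¹(k), σ⁻¹(k+i)} equals {τ⁻¹(k+d), τ⁻¹(k+i−1)}. -/
/-- The element of `Fin n` with value `m` (given via `m % n`; when `m < n` this is just `m`). -/
def mkFin (n m : ℕ) (h : 0 < n) : Fin n := ⟨m % n, Nat.mod_lt _ h⟩

/-- The cycle `(k+d, k+d-1, …, k)` acting on values. -/
def cycleDown (k d v : ℕ) : ℕ :=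
  if v = k then k + d else if k + 1 ≤ v ∧ v ≤ k + d then v - 1 else v

lemma cycleDown_self (k d : ℕ) : cycleDown k d k = k + d := if_pos rfl

lemma cycleDown_of_mem {k d v : ℕ} (h₁ : k + 1 ≤ v) (h₂ : v ≤ k + d) :
    cycleDown k d v = v - 1 := by
  rw [cycleDown, if_neg (by omega), if_pos ⟨h₁, h₂⟩]

lemma mkFin_val_of_lt {n m : ℕ} (h : 0 < n) (hm : m < n) : (mkFin n m h : ℕ) = m :=
  Nat.mod_eq_of_lt hm

lemma Equiv.Perm.inv_eq_inv_of_val_eq {n : ℕ} {σ τ : Equiv.Perm (Fin n)} {g : ℕ → ℕ}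
    (hτ : ∀ x, (τ x : ℕ) = g (σ x)) {y z : Fin n} (h : g z = y) : τ⁻¹ y = σ⁻¹ z := by
  rw [Equiv.Perm.inv_eq_iff_eq]
  ext
  rw [hτ, Equiv.Perm.coe_inv, Equiv.apply_symm_apply, h]

theorem differing_pairs_reindex (n : ℕ)
    (σ τ : Equiv.Perm (Fin n)) (k d : ℕ)
    (hd1 : 1 ≤ d) (hd2 : d ≤ n - k - 1)
    (hτ : ∀ x : Fin n, (τ x : ℕ) =
      if (σ x : ℕ) = k then k + d
      else if k + 1 ≤ (σ x : ℕ) ∧ (σ x : ℕ) ≤ k + d then (σ x : ℕ) - 1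
      else (σ x : ℕ)) :
    ∀ m, 1 ≤ m → m ≤ d →
      ({σ⁻¹ (mkFin n k (by omega)), σ⁻¹ (mkFin n (k + m) (by omega))} : Set (Fin n))
        = {τ⁻¹ (mkFin n (k + d) (by omega)), τ⁻¹ (mkFin n (k + m - 1) (by omega))} := by
  intro m hm₁ hm₂
  have hτ' : ∀ x, (τ x : ℕ) = cycleDown k d (σ x) := hτ
  have hn : 0 < n := by omega
  rw [Equiv.Perm.inv_eq_inv_of_val_eq hτ' (z := mkFin n k hn) (by
      rw [mkFin_val_of_lt hn (by omega), mkFin_val_of_lt hn (by omega), cycleDown_self]),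
    Equiv.Perm.inv_eq_inv_of_val_eq hτ' (z := mkFin n (k + m) hn) (by
      rw [mkFin_val_of_lt hn (by omega), mkFin_val_of_lt hn (by omega),
        cycleDown_of_mem (by omega) (by omega)])]
end
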